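/- arXiv:1404.4768 — 4 statements merged into one kernel-verified Lean document; each statement's English description precedes it below -/
import Mathlib

section
/- Let I be a complex interval with 2^{-ν} ≤ |z| ≤ 2^τ for all z ∈ I. Then width({1/z : z ∈ I}) ≤ 2^{4ν + 2τ + 3} · width(I). -/
open Metric

theorem dist_inv_inv_le_of_le_norm {α : Type*} [NormedDivisionRing α] {r : ℝ} {z w : α}
    (hr : 0 < r) (hz : r ≤ ‖z‖) (hw : r ≤ ‖w‖) :
    dist z⁻¹ w⁻¹ ≤ dist z w / r ^ 2 := by
  have hz₀ : z ≠ 0 := norm_pos_iff.1 (hr.trans_le hz)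
  have hw₀ : w ≠ 0 := norm_pos_iff.1 (hr.trans_le hw)
  rw [dist_inv_inv₀ hz₀ hw₀, sq]
  gcongr

theorem diam_image_inv_le_of_le_norm {α : Type*} [NormedDivisionRing α] {r : ℝ} {s : Set α}
    (hs : Bornology.IsBounded s) (hr : 0 < r) (hsr : ∀ z ∈ s, r ≤ ‖z‖) :
    diam ((fun z => z⁻¹) '' s) ≤ diam s / r ^ 2 := by
  refine diam_le_of_forall_dist_le (by positivity) ?_
  rintro _ ⟨z, hz, rfl⟩ _ ⟨w, hw, rfl⟩
  calc dist z⁻¹ w⁻¹ ≤ dist z w / r ^ 2 := dist_inv_inv_le_of_le_norm hr (hsr z hz) (hsr w hw)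
    _ ≤ diam s / r ^ 2 := by gcongr; exact dist_le_diam_of_mem hs hz hw

theorem stmt5 (ν τ : ℤ) (I : Set ℂ)
    (hI : ∀ z ∈ I, (2 : ℝ) ^ (-ν) ≤ ‖z‖ ∧ ‖z‖ ≤ (2 : ℝ) ^ τ) :
    Metric.diam ((fun z => z⁻¹) '' I) ≤ (2 : ℝ) ^ (4 * ν + 2 * τ + 3) * Metric.diam I := by
  have hbdd : Bornology.IsBounded I :=
    (isBounded_closedBall (x := (0 : ℂ)) (r := 2 ^ τ)).subset fun z hz =>
      mem_closedBall_zero_iff.2 (hI z hz).2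
  calc diam ((fun z => z⁻¹) '' I) ≤ diam I / ((2 : ℝ) ^ (-ν)) ^ 2 :=
        diam_image_inv_le_of_le_norm hbdd (by positivity) fun z hz => (hI z hz).1
    _ = (2 : ℝ) ^ (2 * ν) * diam I := by
        rw [← zpow_natCast, ← zpow_mul, div_eq_mul_inv, ← zpow_neg, mul_comm]
        ring_nf
    _ ≤ (2 : ℝ) ^ (4 * ν + 2 * τ + 3) * diam I := by
        rcases I.eq_empty_or_nonempty with rfl | ⟨z, hz⟩
        · simp
        have hντ : -ν ≤ τ := (zpow_le_zpow_iff_right₀ one_lt_two).1 ((hI z hz).1.trans (hI z hz).2)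
        gcongr
        · exact one_le_two
        · omega
end

section
/- Let F, G ∈ ℂ[x] with deg F = m ≥ n = deg G ≥ 1, G monic, and suppose every complex root of G has modulus at most 2^ρ. Write F = G·Q + R with deg Q = m−n and deg R < n. Then ‖Q‖_∞ ≤ 2^{m + log₂ m + mρ} · ‖F‖_∞. -/
open Polynomial Finset

/-!
Over ℂ the monic `G` is `∏ (X - a)` over its roots, so `F /ₘ G` is obtained by dividing by one
linear factor at a time, and synthetic division gives the `j`-th coefficient of `p /ₘ (X - a)` as
`∑_{i > j} a ^ (i - j - 1) * p_i`. After dividing out `k` roots of modulus at most `B ≥ 1`, the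
`j`-th coefficient is therefore at most `C(m - j, k) * B ^ (m - k - j) * ‖F‖_∞`, the hockey-stick
identity summing the binomial weights. Finally `C(m - j, n) ≤ 2 ^ m` and `log₂ m ≥ 0`.
-/

theorem Nat.sum_Icc_choose_sub_le (m k j : ℕ) :
    ∑ i ∈ Icc (j + 1) (m - k), (m - i).choose k ≤ (m - j).choose (k + 1) := by
  rcases le_or_gt (j + 1) (m - k) with h | h
  · rw [← Nat.sub_add_cancel (show 1 ≤ m - j by omega), ← Nat.sum_Icc_choose]
    refine (sum_nbij' (m - ·) (m - ·) ?_ ?_ ?_ ?_ ?_).le <;> intros <;> simp_all <;> omega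
  · simp [Icc_eq_empty_of_lt h]

namespace Polynomial

theorem divByMonic_mul_of_monic {R : Type*} [CommRing R] (p : R[X]) {q r : R[X]}
    (hq : q.Monic) (hr : r.Monic) : p /ₘ (q * r) = p /ₘ q /ₘ r := by
  nontriviality R
  refine (div_modByMonic_unique (p /ₘ q /ₘ r) (q * (p /ₘ q %ₘ r) + p %ₘ q) (hq.mul hr)
    ⟨?_, ?_⟩).1
  · calc q * (p /ₘ q %ₘ r) + p %ₘ q + q * r * (p /ₘ q /ₘ r)
        = p %ₘ q + q * (p /ₘ q %ₘ r + r * (p /ₘ q /ₘ r)) := by ring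
      _ = p := by rw [modByMonic_add_div, modByMonic_add_div]
  · have hq_ne_bot : q.degree ≠ ⊥ := by simp [hq.ne_zero]
    rw [mul_comm q r, hq.degree_mul]
    refine (degree_add_le _ _).trans_lt (max_lt ?_ ?_)
    · rw [mul_comm, hq.degree_mul]
      exact WithBot.add_lt_add_right hq_ne_bot (degree_modByMonic_lt _ hr)
    · calc (p %ₘ q).degree < q.degree := degree_modByMonic_lt _ hq
        _ ≤ r.degree + q.degree := le_add_of_nonneg_left (zero_le_degree_iff.2 hr.ne_zero)

variable {R : Type*} [NormedCommRing R] [NormOneClass R]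

theorem norm_coeff_divByMonic_X_sub_C_le (p : R[X]) (a : R) (j : ℕ) :
    ‖(p /ₘ (X - C a)).coeff j‖ ≤
      ∑ i ∈ Icc (j + 1) p.natDegree, ‖a‖ ^ (i - (j + 1)) * ‖p.coeff i‖ := by
  rw [coeff_divByMonic_X_sub_C]
  refine (norm_sum_le _ _).trans (sum_le_sum fun i _ => ?_)
  exact (norm_mul_le _ _).trans
    (mul_le_mul_of_nonneg_right (norm_pow_le a _) (norm_nonneg _))

theorem norm_coeff_divByMonic_multiset_prod_X_sub_C_le {B M : ℝ} (hB : 1 ≤ B) (F : R[X])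
    (hF : ∀ i, ‖F.coeff i‖ ≤ M) (s : Multiset R) (hs : ∀ z ∈ s, ‖z‖ ≤ B) (j : ℕ) :
    ‖(F /ₘ (s.map (X - C ·)).prod).coeff j‖ ≤
      M * (F.natDegree - j).choose (Multiset.card s) *
        B ^ (F.natDegree - Multiset.card s - j) := by
  have : Nontrivial R := NormOneClass.nontrivial
  have hM : 0 ≤ M := (norm_nonneg _).trans (hF 0)
  set m := F.natDegree
  induction s using Multiset.induction_on generalizing j with
  | empty =>
    simpa using (hF j).trans (le_mul_of_one_le_right hM (one_le_pow₀ hB))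
  | cons a s ih =>
    obtain ⟨ha, hs⟩ := Multiset.forall_mem_cons.1 hs
    set k := Multiset.card s
    set Q := F /ₘ (s.map (X - C ·)).prod
    have hP : (s.map (X - C ·)).prod.Monic :=
      monic_multiset_prod_of_monic _ _ fun z _ => monic_X_sub_C z
    have hQ : Q.natDegree = m - k := by
      rw [natDegree_divByMonic F hP, natDegree_multiset_prod_X_sub_C_eq_card]
    have hterm : ∀ i ∈ Icc (j + 1) (m - k), ‖a‖ ^ (i - (j + 1)) * ‖Q.coeff i‖ ≤
        M * (m - i).choose k * B ^ (m - k - (j + 1)) := by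
      intro i hi
      obtain ⟨hji, him⟩ := mem_Icc.1 hi
      calc ‖a‖ ^ (i - (j + 1)) * ‖Q.coeff i‖
          ≤ B ^ (i - (j + 1)) * (M * (m - i).choose k * B ^ (m - k - i)) := by
            gcongr
            exact ih hs i
        _ = M * (m - i).choose k * B ^ (i - (j + 1) + (m - k - i)) := by ring
        _ = M * (m - i).choose k * B ^ (m - k - (j + 1)) := by congr 2; omega
    rw [Multiset.map_cons, Multiset.prod_cons, mul_comm,
      divByMonic_mul_of_monic F hP (monic_X_sub_C a), Multiset.card_cons]
    calc ‖(Q /ₘ (X - C a)).coeff j‖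
        ≤ ∑ i ∈ Icc (j + 1) (m - k), ‖a‖ ^ (i - (j + 1)) * ‖Q.coeff i‖ :=
          hQ ▸ norm_coeff_divByMonic_X_sub_C_le Q a j
      _ ≤ ∑ i ∈ Icc (j + 1) (m - k), M * (m - i).choose k * B ^ (m - k - (j + 1)) :=
          sum_le_sum hterm
      _ = M * (∑ i ∈ Icc (j + 1) (m - k), ((m - i).choose k : ℝ)) *
            B ^ (m - k - (j + 1)) := by rw [mul_sum, sum_mul]
      _ ≤ M * (m - j).choose (k + 1) * B ^ (m - (k + 1) - j) := by
          rw [show m - (k + 1) - j = m - k - (j + 1) by omega]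
          gcongr
          exact_mod_cast Nat.sum_Icc_choose_sub_le m k j

end Polynomial

theorem stmt6_general (m : ℕ) (ρ : ℝ) (hρ : 0 ≤ ρ) (F G : Polynomial ℂ)
    (hG : G.Monic) (hFdeg : F.natDegree = m)
    (hroots : ∀ z : ℂ, G.eval z = 0 → ‖z‖ ≤ (2 : ℝ) ^ ρ)
    (MF : ℝ) (hMF : ∀ i, ‖F.coeff i‖ ≤ MF) :
    ∀ i, ‖(F /ₘ G).coeff i‖ ≤
      2 ^ ((m : ℝ) + Real.logb 2 m + m * ρ) * MF := by
  intro i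
  set B : ℝ := 2 ^ ρ
  have hB : 1 ≤ B := Real.one_le_rpow one_le_two hρ
  have hM : 0 ≤ MF := (norm_nonneg _).trans (hMF 0)
  have hbound := norm_coeff_divByMonic_multiset_prod_X_sub_C_le hB F hMF G.roots
    (fun z hz => hroots z (mem_roots'.1 hz).2) i
  rw [← (IsAlgClosed.splits G).eq_prod_roots_of_monic hG, hFdeg] at hbound
  have hchoose : ((m - i).choose (Multiset.card G.roots) : ℝ) ≤ 2 ^ m := by
    exact_mod_cast (Nat.choose_le_two_pow _ _).trans (Nat.pow_le_pow_right two_pos (m.sub_le i))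
  have hscale : (2 : ℝ) ^ m * B ^ m ≤ 2 ^ ((m : ℝ) + Real.logb 2 m + m * ρ) := by
    have hlogb : 0 ≤ Real.logb 2 m :=
      div_nonneg (Real.log_natCast_nonneg m) (Real.log_nonneg one_le_two)
    calc (2 : ℝ) ^ m * B ^ m = 2 ^ ((m : ℝ) + m * ρ) := by
          rw [Real.rpow_add two_pos, Real.rpow_natCast, mul_comm (m : ℝ),
            Real.rpow_mul_natCast zero_le_two]
      _ ≤ _ := Real.rpow_le_rpow_of_exponent_le one_le_two (by linarith)
  calc ‖(F /ₘ G).coeff i‖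
      ≤ MF * (m - i).choose (Multiset.card G.roots) * B ^ (m - Multiset.card G.roots - i) :=
        hbound
    _ ≤ MF * 2 ^ m * B ^ m := by gcongr; omega
    _ = 2 ^ m * B ^ m * MF := by ring
    _ ≤ 2 ^ ((m : ℝ) + Real.logb 2 m + m * ρ) * MF := by gcongr

theorem stmt6 (m n : ℕ) (ρ : ℝ) (hρ : 0 ≤ ρ) (F G : Polynomial ℂ)
    (hG : G.Monic) (hFdeg : F.natDegree = m) (hGdeg : G.natDegree = n)
    (hn : 1 ≤ n) (hnm : n ≤ m)
    (hroots : ∀ z : ℂ, G.eval z = 0 → ‖z‖ ≤ (2 : ℝ) ^ ρ)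
    (MF : ℝ) (hMF : ∀ i, ‖F.coeff i‖ ≤ MF) :
    ∀ i, ‖(F /ₘ G).coeff i‖ ≤
      2 ^ ((m : ℝ) + Real.logb 2 m + m * ρ) * MF :=
  stmt6_general m ρ hρ F G hG hFdeg hroots MF hMF
end

section
/- Let P_j ∈ ℂ[x], 1 ≤ j ≤ m, each of degree n with ‖P_j‖_∞ ≤ 2^τ. Then the product satisfies ‖Π_{j=1}^m P_j‖_∞ ≤ 2^{mτ + (m−1)log₂ n + 4m − log₂ m − 4}. -/
open Polynomial Finset

/-
Multiplying by a polynomial of degree at most n, whose coefficients are bounded by A, multiplies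
the coefficient bound by at most (n + 1) A, since each coefficient of the product is a sum of at
most n + 1 products of coefficients. Iterating over the m factors bounds the coefficients of the
product by (n + 1)^(m-1) 2^(mτ). Finally (n + 1)^(m-1) ≤ (2n)^(m-1), and m ≤ 8^(m-1) absorbs the
factor 1/m, giving (n + 1)^(m-1) ≤ (16n)^(m-1) / m.
-/

section CoeffBound

variable {R : Type*} [SeminormedRing R]

lemma sum_range_norm_coeff_le {p : R[X]} {d : ℕ} {A : ℝ} (hd : p.natDegree ≤ d)
    (hp : ∀ k, ‖p.coeff k‖ ≤ A) (N : ℕ) :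
    ∑ k ∈ range N, ‖p.coeff k‖ ≤ (d + 1) * A := by
  have hvanish : ∀ k ∈ range N, k ∉ range N ∩ range (d + 1) → ‖p.coeff k‖ = 0 := by
    intro k hk hk'
    have hdk : d < k := by simp_all
    simp [coeff_eq_zero_of_natDegree_lt (hd.trans_lt hdk)]
  calc ∑ k ∈ range N, ‖p.coeff k‖ = ∑ k ∈ range N ∩ range (d + 1), ‖p.coeff k‖ :=
        (sum_subset inter_subset_left hvanish).symm
    _ ≤ ∑ k ∈ range (d + 1), ‖p.coeff k‖ :=
        sum_le_sum_of_subset_of_nonneg inter_subset_right fun _ _ _ => norm_nonneg _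
    _ ≤ (d + 1) * A := by simpa using sum_le_card_nsmul (range (d + 1)) _ _ fun k _ => hp k

lemma norm_coeff_mul_le {p q : R[X]} {d : ℕ} {A B : ℝ} (hB : 0 ≤ B) (hd : p.natDegree ≤ d)
    (hp : ∀ k, ‖p.coeff k‖ ≤ A) (hq : ∀ k, ‖q.coeff k‖ ≤ B) (i : ℕ) :
    ‖(p * q).coeff i‖ ≤ (d + 1) * A * B := by
  rw [coeff_mul]
  calc ‖∑ x ∈ antidiagonal i, p.coeff x.1 * q.coeff x.2‖
      ≤ ∑ x ∈ antidiagonal i, ‖p.coeff x.1‖ * ‖q.coeff x.2‖ :=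
        (norm_sum_le _ _).trans (sum_le_sum fun _ _ => norm_mul_le _ _)
    _ ≤ ∑ x ∈ antidiagonal i, ‖p.coeff x.1‖ * B :=
        sum_le_sum fun _ _ => mul_le_mul_of_nonneg_left (hq _) (norm_nonneg _)
    _ = (∑ k ∈ range (i + 1), ‖p.coeff k‖) * B := by
        rw [← sum_mul, Nat.sum_antidiagonal_eq_sum_range_succ_mk]
    _ ≤ (d + 1) * A * B := mul_le_mul_of_nonneg_right (sum_range_norm_coeff_le hd hp _) hB

lemma norm_coeff_prod_le {R : Type*} [SeminormedCommRing R] {n k : ℕ} {A : ℝ} (hA : 0 ≤ A)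
    (P : Fin (k + 1) → R[X]) (hdeg : ∀ j, (P j).natDegree ≤ n)
    (hP : ∀ j i, ‖(P j).coeff i‖ ≤ A) (i : ℕ) :
    ‖(∏ j, P j).coeff i‖ ≤ (n + 1) ^ k * A ^ (k + 1) := by
  induction k generalizing i with
  | zero => simpa using hP 0 i
  | succ k ih =>
    have htail := ih (fun j => P j.succ) (fun j => hdeg _) (fun j => hP _)
    rw [Fin.prod_univ_succ]
    calc ‖(P 0 * ∏ j : Fin (k + 1), P j.succ).coeff i‖
        ≤ (n + 1) * A * ((n + 1) ^ k * A ^ (k + 1)) :=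
          norm_coeff_mul_le (by positivity) (hdeg 0) (hP 0) htail i
      _ = (n + 1) ^ (k + 1) * A ^ (k + 1 + 1) := by ring

end CoeffBound

lemma add_one_pow_mul_le_sixteen_mul_pow {n : ℝ} (hn : 1 ≤ n) (k : ℕ) :
    (n + 1) ^ k * (k + 1) ≤ (16 * n) ^ k := by
  have hk : (k + 1 : ℝ) ≤ 8 ^ k := by
    exact_mod_cast (Nat.lt_pow_self (by norm_num : 1 < 2)).trans_le
      (Nat.pow_le_pow_left (by norm_num : 2 ≤ 8) k)
  calc (n + 1) ^ k * (k + 1) ≤ (2 * n) ^ k * 8 ^ k :=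
        mul_le_mul (pow_le_pow_left₀ (by linarith) (by linarith) k) hk (by positivity)
          (by positivity)
    _ = (16 * n) ^ k := by rw [← mul_pow]; ring_nf

lemma two_rpow_eq_pow_mul_pow_div {n : ℝ} (hn : 0 < n) (k : ℕ) (τ : ℝ) :
    (2 : ℝ) ^ (((k + 1 : ℕ) : ℝ) * τ + (((k + 1 : ℕ) : ℝ) - 1) * Real.logb 2 n +
      4 * ((k + 1 : ℕ) : ℝ) - Real.logb 2 ((k + 1 : ℕ) : ℝ) - 4) =
      ((2 : ℝ) ^ τ) ^ (k + 1) * (16 * n) ^ k / (k + 1) := by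
  have h16n : (2 : ℝ) ^ (Real.logb 2 n + 4) = 16 * n := by
    rw [Real.rpow_add two_pos, Real.rpow_logb two_pos (by norm_num) hn]
    ring
  have hexp : ((k + 1 : ℕ) : ℝ) * τ + (((k + 1 : ℕ) : ℝ) - 1) * Real.logb 2 n +
      4 * ((k + 1 : ℕ) : ℝ) - Real.logb 2 ((k + 1 : ℕ) : ℝ) - 4 =
      τ * ((k + 1 : ℕ) : ℝ) + (Real.logb 2 n + 4) * (k : ℝ) -
        Real.logb 2 ((k + 1 : ℕ) : ℝ) := by
    push_cast; ring
  rw [hexp, Real.rpow_sub two_pos, Real.rpow_add two_pos, Real.rpow_mul_natCast zero_le_two,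
    Real.rpow_mul_natCast zero_le_two, h16n,
    Real.rpow_logb two_pos (by norm_num) (by positivity)]
  push_cast
  rfl

theorem stmt14 (m n : ℕ) (hm : 1 ≤ m) (hn : 1 ≤ n) (τ : ℝ)
    (P : Fin m → Polynomial ℂ) (hdeg : ∀ j, (P j).natDegree = n)
    (hcoeff : ∀ j i, ‖(P j).coeff i‖ ≤ (2 : ℝ) ^ τ) :
    ∀ i, ‖(∏ j, P j).coeff i‖ ≤
      2 ^ ((m : ℝ) * τ + ((m : ℝ) - 1) * Real.logb 2 n + 4 * (m : ℝ) -
        Real.logb 2 m - 4) := by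
  intro i
  obtain ⟨k, rfl⟩ := Nat.exists_eq_add_of_le' hm
  have hn' : (1 : ℝ) ≤ n := by exact_mod_cast hn
  have hprod := norm_coeff_prod_le (by positivity) P (fun j => (hdeg j).le) hcoeff i
  rw [two_rpow_eq_pow_mul_pow_div (by linarith) k τ, le_div_iff₀ (by positivity)]
  calc ‖(∏ j, P j).coeff i‖ * (k + 1) ≤ ((n + 1) ^ k * (2 ^ τ) ^ (k + 1)) * (k + 1) := by
        gcongr
    _ = (2 ^ τ) ^ (k + 1) * ((n + 1) ^ k * (k + 1)) := by ring
    _ ≤ (2 ^ τ) ^ (k + 1) * (16 * n) ^ k := by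
        gcongr
        exact add_one_pow_mul_le_sixteen_mul_pow hn' k
end

section
/- Let s = (s_i) and t = (t_j) be vectors of n distinct complex numbers with s_i ≠ t_j for all i, j, and let C(s,t) be the Cauchy matrix with entries 1/(s_i − t_j). Let p_t(X) = Π_i (X − t_i) and p_s(X) = Π_i (X − s_i). Then C(s,t) is invertible and C(s,t)^{-1} = diag(p_s(t_i)/p_t'(t_i)) · C(t,s) · diag(p_t(s_i)/p_s'(s_i)). -/
/-! Write `p_s`, `p_t` for the nodal polynomials of `s` and `t`, and `q_j = p_s / (X - s_j)`.
Since `p_s(t_k) / (t_k - s_j) = q_j(t_k)`, entry `(i, j)` of `C(s,t)` times the claimed inverse is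
`p_t(s_j) / p_s'(s_j)` times `∑_k q_j(t_k) / (p_t'(t_k) (s_i - t_k))`. As `deg q_j < n`, Lagrange
interpolation at the nodes `t` evaluates that sum to `q_j(s_i) / p_t(s_i)`; and
`p_s'(s_j) = q_j(s_j)`, while `q_j(s_i) = 0` for `i ≠ j`. -/

open Polynomial Finset

namespace Lagrange

variable {F ι : Type*} [Field F]

theorem eval_nodal_erase_of_ne [DecidableEq ι] {s : Finset ι} {v : ι → F} {i : ι}
    (hi : i ∈ s) {x : F} (hx : x ≠ v i) :
    (nodal (s.erase i) v).eval x = (nodal s v).eval x / (x - v i) := by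
  rw [nodal_eq_mul_nodal_erase hi, eval_mul, eval_sub, eval_X, eval_C,
    mul_div_cancel_left₀ _ (sub_ne_zero.mpr hx)]

theorem sum_eval_div_eval_derivative_nodal [DecidableEq ι] {s : Finset ι} {v : ι → F}
    (hvs : Set.InjOn v s) {f : F[X]} (hf : f.degree < #s) {x : F} (hx : ∀ i ∈ s, x ≠ v i) :
    ∑ i ∈ s, f.eval (v i) / ((derivative (nodal s v)).eval (v i) * (x - v i)) =
      f.eval x / (nodal s v).eval x := by
  have hinterp := eval_interpolate_not_at_node (fun i => f.eval (v i)) hx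
  rw [← eq_interpolate hvs hf] at hinterp
  rw [hinterp, mul_div_cancel_left₀ _ (eval_nodal_not_at_node hx)]
  refine sum_congr rfl fun i hi => ?_
  rw [nodalWeight_eq_eval_derivative_nodal hi, div_eq_mul_inv, mul_inv]
  ring

end Lagrange

namespace Matrix

variable {F ι : Type*} [Field F] [Fintype ι] [DecidableEq ι]

def cauchy (s t : ι → F) : Matrix ι ι F :=
  of fun i j => (s i - t j)⁻¹

open Lagrange in
theorem cauchy_mul_eq_one {s t : ι → F} (hs : Function.Injective s) (ht : Function.Injective t)
    (hst : ∀ i j, s i ≠ t j) :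
    cauchy s t *
        (diagonal (fun i => (nodal univ s).eval (t i) / (derivative (nodal univ t)).eval (t i)) *
          cauchy t s *
          diagonal (fun i => (nodal univ t).eval (s i) / (derivative (nodal univ s)).eval (s i))) =
      1 := by
  ext i j
  set q := nodal (univ.erase j) s
  have hq_deg : q.degree < #(univ : Finset ι) := by
    rw [degree_nodal, card_erase_of_mem (mem_univ j)]
    exact_mod_cast Nat.sub_lt (card_pos.mpr ⟨j, mem_univ j⟩) one_pos
  have hsum := sum_eval_div_eval_derivative_nodal ht.injOn hq_deg (fun k _ => hst i k)
  have hq_sj : (derivative (nodal univ s)).eval (s j) = q.eval (s j) :=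
    eval_nodal_derivative_eval_node_eq (mem_univ j)
  have hq_sj_ne : q.eval (s j) ≠ 0 :=
    eval_nodal_not_at_node fun k hk h => (mem_erase.mp hk).1 (hs h).symm
  have hpt_si : (nodal univ t).eval (s i) ≠ 0 := eval_nodal_not_at_node fun k _ => hst i k
  calc _ = (∑ k, q.eval (t k) / ((derivative (nodal univ t)).eval (t k) * (s i - t k))) *
          ((nodal univ t).eval (s j) / (derivative (nodal univ s)).eval (s j)) := by
        rw [mul_apply, sum_mul]
        simp only [mul_diagonal, diagonal_mul, cauchy, of_apply, q, div_eq_mul_inv, mul_inv,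
          eval_nodal_erase_of_ne (mem_univ j) (hst j _).symm]
        refine sum_congr rfl fun k _ => ?_
        ring
    _ = q.eval (s i) / q.eval (s j) * ((nodal univ t).eval (s j) / (nodal univ t).eval (s i)) := by
        rw [hsum, hq_sj]
        ring
    _ = _ := by
        rcases eq_or_ne i j with rfl | hij
        · rw [one_apply_eq, div_self hq_sj_ne, div_self hpt_si, one_mul]
        · rw [one_apply_ne hij, eval_nodal_at_node (mem_erase.mpr ⟨hij, mem_univ i⟩), zero_div,
            zero_mul]

end Matrix

theorem stmt18 (n : ℕ) (s t : Fin n → ℂ)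
    (hs : Function.Injective s) (ht : Function.Injective t)
    (hst : ∀ i j, s i ≠ t j) :
    IsUnit (Matrix.of fun i j : Fin n => (s i - t j)⁻¹) ∧
    (Matrix.of fun i j : Fin n => (s i - t j)⁻¹)⁻¹ =
      Matrix.diagonal (fun i =>
          (∏ k, (Polynomial.X - Polynomial.C (s k))).eval (t i) /
            (Polynomial.derivative (∏ k, (Polynomial.X - Polynomial.C (t k)))).eval (t i)) *
        (Matrix.of fun i j : Fin n => (t i - s j)⁻¹) *
        Matrix.diagonal (fun i =>
          (∏ k, (Polynomial.X - Polynomial.C (t k))).eval (s i) /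
            (Polynomial.derivative (∏ k, (Polynomial.X - Polynomial.C (s k)))).eval (s i)) := by
  have h := Matrix.cauchy_mul_eq_one hs ht hst
  exact ⟨IsUnit.of_mul_eq_one _ h, Matrix.inv_eq_right_inv h⟩
end
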